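/- Let c be an immersed closed curve and h, k directions. Then the functions t ↦ Θ^{1+κ²}(c + t·h, k) and t ↦ Θ^{1+κ²}(c + t·k, h) are differentiable at t = 0, and −(d/dt)|_{t=0} Θ^{1+κ²}(c + t·h, k) + (d/dt)|_{t=0} Θ^{1+κ²}(c + t·k, h) = Ω^{1+κ²}(h, k), i.e. the presymplectic form induced by the curvature-weighted metric G^{1+κ²} is given by the stated explicit integral formula. -/

import Mathlib

noncomputable section

open Real

/-- Points of `ℝ³`. -/
abbrev V3 := Fin 3 → ℝ

/-- Euclidean inner product on `ℝ³`. -/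
def dot3 (u v : V3) : ℝ := u 0 * v 0 + u 1 * v 1 + u 2 * v 2

/-- Cross product on `ℝ³`. -/
def cross3 (u v : V3) : V3 :=
  ![u 1 * v 2 - u 2 * v 1, u 2 * v 0 - u 0 * v 2, u 0 * v 1 - u 1 * v 0]

/-- Euclidean norm on `ℝ³`. -/
def norm3 (u : V3) : ℝ := Real.sqrt (dot3 u u)

/-- A closed curve: a smooth `2π`-periodic map `ℝ → ℝ³`. -/
def IsClosedCurve (c : ℝ → V3) : Prop :=
  ContDiff ℝ (⊤ : ℕ∞) c ∧ ∀ θ, c (θ + 2 * π) = c θ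

/-- An immersed closed curve: `c'(θ) ≠ 0` for all `θ`. -/
def IsImmersed (c : ℝ → V3) : Prop :=
  IsClosedCurve c ∧ ∀ θ, deriv c θ ≠ 0

/-- A direction (tangent vector): a smooth `2π`-periodic map `ℝ → ℝ³`. -/
def IsDirection (h : ℝ → V3) : Prop :=
  ContDiff ℝ (⊤ : ℕ∞) h ∧ ∀ θ, h (θ + 2 * π) = h θ

/-- Arc-length derivative along `c`: `D_s h = h'/|c'|`. -/
def Ds (c h : ℝ → V3) : ℝ → V3 := fun θ => (norm3 (deriv c θ))⁻¹ • deriv h θ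

/-- The unit tangent `T = D_s c = c'/|c'|`. -/
def unitT (c : ℝ → V3) : ℝ → V3 := Ds c c

/-- `D_s² c = D_s (D_s c)`. -/
def Ds2c (c : ℝ → V3) : ℝ → V3 := Ds c (Ds c c)

/-- Arc-length integral `∫ f ds = ∫₀^{2π} f(θ) |c'(θ)| dθ`. -/
def arcInt (c : ℝ → V3) (f : ℝ → ℝ) : ℝ :=
  ∫ θ in (0:ℝ)..(2 * π), f θ * norm3 (deriv c θ)

/-- `L²(ds)` pairing `⟨f,g⟩_{L²} = ∫ ⟨f,g⟩ ds`. -/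
def L2 (c f g : ℝ → V3) : ℝ := arcInt c (fun θ => dot3 (f θ) (g θ))

/-- Length `ℓ_c = ∫₀^{2π} |c'(θ)| dθ`. -/
def curveLen (c : ℝ → V3) : ℝ := ∫ θ in (0:ℝ)..(2 * π), norm3 (deriv c θ)

/-- The Liouville one-form for `L = id`: `Θ(c,h) = ∫₀^{2π} ⟨c × c', h⟩ dθ`. -/
def Theta (c h : ℝ → V3) : ℝ :=
  ∫ θ in (0:ℝ)..(2 * π), dot3 (cross3 (c θ) (deriv c θ)) (h θ)

/-- The squared curvature `κ² = |D_s² c|²`. -/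
def kappaSq (c : ℝ → V3) (θ : ℝ) : ℝ := dot3 (Ds2c c θ) (Ds2c c θ)

/-- The curvature-weighted Liouville form `Θ^{1+κ²}(c,h) = ∫ (1+κ²)⟨c × D_s c, h⟩ ds`. -/
def ThetaK (c h : ℝ → V3) : ℝ :=
  arcInt c (fun θ => (1 + kappaSq c θ) * dot3 (cross3 (c θ) (unitT c θ)) (h θ))

/-- Arc-length derivative of a scalar function along `c`. -/
def DsScalar (c : ℝ → V3) (f : ℝ → ℝ) : ℝ → ℝ := fun θ => (norm3 (deriv c θ))⁻¹ * deriv f θ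

/-- The curvature-weighted presymplectic form at `c`. -/
def OmegaK (c h k : ℝ → V3) : ℝ :=
  arcInt c (fun θ =>
    3 * (1 + kappaSq c θ) * dot3 (unitT c θ) (cross3 (h θ) (k θ))
    + DsScalar c (kappaSq c) θ * dot3 (c θ) (cross3 (h θ) (k θ))
    + (4 * kappaSq c θ * dot3 (Ds c h θ) (unitT c θ)
        - 2 * dot3 (Ds c (Ds c h) θ) (Ds2c c θ)) * dot3 (cross3 (c θ) (unitT c θ)) (k θ)
    - (4 * kappaSq c θ * dot3 (Ds c k θ) (unitT c θ)
        - 2 * dot3 (Ds c (Ds c k) θ) (Ds2c c θ)) * dot3 (cross3 (c θ) (unitT c θ)) (h θ))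

namespace CW

@[simp] lemma cross3_0 (u v : V3) : cross3 u v 0 = u 1 * v 2 - u 2 * v 1 := rfl
@[simp] lemma cross3_1 (u v : V3) : cross3 u v 1 = u 2 * v 0 - u 0 * v 2 := rfl
@[simp] lemma cross3_2 (u v : V3) : cross3 u v 2 = u 0 * v 1 - u 1 * v 0 := rfl

lemma dot3_nonneg (u : V3) : 0 ≤ dot3 u u := by
  simp only [dot3]; nlinarith [sq_nonneg (u 0), sq_nonneg (u 1), sq_nonneg (u 2)]

lemma dot3_pos_of_ne (u : V3) (hu : u ≠ 0) : 0 < dot3 u u := by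
  rcases (dot3_nonneg u).lt_or_eq with h | h
  · exact h
  · exfalso; apply hu; funext i
    have h0 : u 0 * u 0 + u 1 * u 1 + u 2 * u 2 = 0 := (by simpa [dot3] using h.symm)
    have h1 : u 0 = 0 ∧ u 1 = 0 ∧ u 2 = 0 := by
      refine ⟨?_, ?_, ?_⟩ <;> nlinarith [sq_nonneg (u 0), sq_nonneg (u 1), sq_nonneg (u 2)]
    fin_cases i <;> simp [h1.1, h1.2.1, h1.2.2]

lemma norm3_sq (u : V3) : norm3 u * norm3 u = dot3 u u := by
  simpa [norm3] using Real.mul_self_sqrt (dot3_nonneg u)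

lemma norm3_pos (u : V3) (hu : u ≠ 0) : 0 < norm3 u :=
  Real.sqrt_pos.mpr (dot3_pos_of_ne u hu)

lemma dot3_comm (u v : V3) : dot3 u v = dot3 v u := by simp [dot3]; ring

lemma dot3_comb (a b : ℝ) (x y : V3) :
    dot3 (a • x - b • y) (a • x - b • y)
      = a * a * dot3 x x - 2 * (a * b) * dot3 x y + b * b * dot3 y y := by
  simp [dot3, Pi.smul_apply, Pi.sub_apply, smul_eq_mul]; ring

lemma dot3_cross3_smul (x : V3) (r : ℝ) (y : V3) (k : V3) :
    dot3 (cross3 x (r • y)) k = r * dot3 (cross3 x y) k := by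
  simp [dot3, cross3]; ring

lemma hasDerivAt_dot3 {f g : ℝ → V3} {f' g' : V3} {x : ℝ}
    (hf : HasDerivAt f f' x) (hg : HasDerivAt g g' x) :
    HasDerivAt (fun θ => dot3 (f θ) (g θ)) (dot3 f' (g x) + dot3 (f x) g') x := by
  have hfi := hasDerivAt_pi.mp hf
  have hgi := hasDerivAt_pi.mp hg
  have := (((hfi 0).mul (hgi 0)).add ((hfi 1).mul (hgi 1))).add ((hfi 2).mul (hgi 2))
  refine this.congr_deriv ?_ <;> simp [dot3] <;> ring

lemma hasDerivAt_cross3 {f g : ℝ → V3} {f' g' : V3} {x : ℝ}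
    (hf : HasDerivAt f f' x) (hg : HasDerivAt g g' x) :
    HasDerivAt (fun θ => cross3 (f θ) (g θ)) (cross3 f' (g x) + cross3 (f x) g') x := by
  have hfi := hasDerivAt_pi.mp hf
  have hgi := hasDerivAt_pi.mp hg
  rw [hasDerivAt_pi]
  intro i
  fin_cases i
  · have := ((hfi 1).mul (hgi 2)).sub ((hfi 2).mul (hgi 1))
    refine this.congr_deriv ?_ <;> simp <;> ring
  · have := ((hfi 2).mul (hgi 0)).sub ((hfi 0).mul (hgi 2))
    refine this.congr_deriv ?_ <;> simp <;> ring
  · have := ((hfi 0).mul (hgi 1)).sub ((hfi 1).mul (hgi 0))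
    refine this.congr_deriv ?_ <;> simp <;> ring

lemma periodic_deriv {f : ℝ → V3} (T : ℝ) (hf : ∀ θ, f (θ + T) = f θ) :
    ∀ θ, deriv f (θ + T) = deriv f θ := by
  intro θ
  have : deriv (fun x => f (x + T)) θ = deriv f (θ + T) := by
    simpa using deriv_comp_add_const f T θ
  rw [← this]
  congr 1
  funext x; exact hf x

lemma hasDerivAt_norm3 {f : ℝ → V3} {f' : V3} {x : ℝ}
    (hf : HasDerivAt f f' x) (hne : f x ≠ 0) :
    HasDerivAt (fun θ => norm3 (f θ)) (dot3 (f x) f' / norm3 (f x)) x := by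
  have hQ : HasDerivAt (fun θ => dot3 (f θ) (f θ)) (dot3 f' (f x) + dot3 (f x) f') x :=
    hasDerivAt_dot3 hf hf
  have hQQ : dot3 (f x) (f x) ≠ 0 := (dot3_pos_of_ne _ hne).ne'
  have := (Real.hasDerivAt_sqrt hQQ).comp x hQ
  have hcomm : dot3 f' (f x) = dot3 (f x) f' := dot3_comm _ _
  refine this.congr_deriv ?_
  have hs : Real.sqrt (dot3 (f x) (f x)) ≠ 0 := by
    rw [← norm3]; exact (norm3_pos _ hne).ne'
  rw [hcomm, norm3]
  field_simp
  ring

/-- closed form for `Ds γ (Ds γ f)`. -/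
lemma DsDs_eq (γ f : ℝ → V3) (u du v dv : ℝ → V3)
    (hγ : deriv γ = u) (hu : ∀ θ, HasDerivAt u (du θ) θ)
    (hv : deriv f = v) (hdv : ∀ θ, HasDerivAt v (dv θ) θ)
    (hne : ∀ θ, u θ ≠ 0) (θ : ℝ) :
    Ds γ (Ds γ f) θ =
      (dot3 (u θ) (u θ))⁻¹ • dv θ
        - (dot3 (u θ) (du θ) / (dot3 (u θ) (u θ))^2) • v θ := by
  have hn : ∀ s, norm3 (u s) ≠ 0 := fun s => (norm3_pos _ (hne s)).ne'
  have hQ : ∀ s, dot3 (u s) (u s) ≠ 0 := fun s => (dot3_pos_of_ne _ (hne s)).ne'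
  have hDs : Ds γ f = fun s => (norm3 (u s))⁻¹ • v s := by
    funext s; simp [Ds, hγ, hv]
  have hder : ∀ s, HasDerivAt (fun s => (norm3 (u s))⁻¹ • v s)
      ((norm3 (u s))⁻¹ • dv s + (-(dot3 (u s) (du s) / norm3 (u s)) / (norm3 (u s))^2) • v s) s := by
    intro s
    exact ((hasDerivAt_norm3 (hu s) (hne s)).inv (hn s)).smul (hdv s)
  have hderiv : deriv (Ds γ f) θ =
      (norm3 (u θ))⁻¹ • dv θ + (-(dot3 (u θ) (du θ) / norm3 (u θ)) / (norm3 (u θ))^2) • v θ := by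
    rw [hDs]; exact (hder θ).deriv
  show (norm3 (deriv γ θ))⁻¹ • deriv (Ds γ f) θ = _
  rw [hγ, hderiv, smul_add, smul_smul, smul_smul]
  have e1 : (norm3 (u θ))⁻¹ * (norm3 (u θ))⁻¹ = (dot3 (u θ) (u θ))⁻¹ := by
    rw [← mul_inv]; rw [norm3_sq]
  have e2 : (norm3 (u θ))⁻¹ * (-(dot3 (u θ) (du θ) / norm3 (u θ)) / (norm3 (u θ))^2)
      = -(dot3 (u θ) (du θ) / (dot3 (u θ) (u θ))^2) := by
    have h2 : (norm3 (u θ))^2 = dot3 (u θ) (u θ) := by rw [sq, norm3_sq]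
    calc (norm3 (u θ))⁻¹ * (-(dot3 (u θ) (du θ) / norm3 (u θ)) / (norm3 (u θ))^2)
        = -(dot3 (u θ) (du θ) / ((norm3 (u θ))^2)^2) := by
          field_simp [hn θ]
      _ = -(dot3 (u θ) (du θ) / (dot3 (u θ) (u θ))^2) := by rw [h2]
  rw [e1, e2]
  module

/-- closed form for `Ds γ f` paired against another closed form, and κ². -/
lemma kappaSq_eq (γ : ℝ → V3) (u du : ℝ → V3)
    (hγ : deriv γ = u) (hu : ∀ θ, HasDerivAt u (du θ) θ)
    (hne : ∀ θ, u θ ≠ 0) (θ : ℝ) :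
    kappaSq γ θ = dot3 (du θ) (du θ) / (dot3 (u θ) (u θ))^2
      - (dot3 (u θ) (du θ))^2 / (dot3 (u θ) (u θ))^3 := by
  have hQ : dot3 (u θ) (u θ) ≠ 0 := (dot3_pos_of_ne _ (hne θ)).ne'
  have h := DsDs_eq γ γ u du u du hγ hu hγ hu hne θ
  show dot3 (Ds2c γ θ) (Ds2c γ θ) = _
  rw [show Ds2c γ = Ds γ (Ds γ γ) from rfl, h, dot3_comb]
  rw [dot3_comm (du θ) (u θ)]
  field_simp
  ring

end CW
namespace CW

def uu (c d : ℝ → V3) (t θ : ℝ) : V3 := deriv c θ + t • deriv d θ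
def duu (c d : ℝ → V3) (t θ : ℝ) : V3 := deriv (deriv c) θ + t • deriv (deriv d) θ
def Qq (c d : ℝ → V3) (t θ : ℝ) : ℝ := dot3 (uu c d t θ) (uu c d t θ)
def Aa (c d : ℝ → V3) (t θ : ℝ) : ℝ := dot3 (duu c d t θ) (duu c d t θ)
def Bb (c d : ℝ → V3) (t θ : ℝ) : ℝ := dot3 (uu c d t θ) (duu c d t θ)
def Ww (c d k : ℝ → V3) (t θ : ℝ) : ℝ := dot3 (cross3 (c θ + t • d θ) (uu c d t θ)) (k θ)
def Gf (c d k : ℝ → V3) (t θ : ℝ) : ℝ :=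
  (1 + Aa c d t θ / (Qq c d t θ)^2 - (Bb c d t θ)^2 / (Qq c d t θ)^3) * Ww c d k t θ
def dAa (c d : ℝ → V3) (t θ : ℝ) : ℝ := 2 * dot3 (duu c d t θ) (deriv (deriv d) θ)
def dQq (c d : ℝ → V3) (t θ : ℝ) : ℝ := 2 * dot3 (uu c d t θ) (deriv d θ)
def dBb (c d : ℝ → V3) (t θ : ℝ) : ℝ :=
  dot3 (deriv d θ) (duu c d t θ) + dot3 (uu c d t θ) (deriv (deriv d) θ)
def dWw (c d k : ℝ → V3) (t θ : ℝ) : ℝ :=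
  dot3 (cross3 (d θ) (uu c d t θ)) (k θ) + dot3 (cross3 (c θ + t • d θ) (deriv d θ)) (k θ)
def DGf (c d k : ℝ → V3) (t θ : ℝ) : ℝ :=
  (dAa c d t θ / (Qq c d t θ)^2 - 2 * Aa c d t θ * dQq c d t θ / (Qq c d t θ)^3
    - 2 * Bb c d t θ * dBb c d t θ / (Qq c d t θ)^3
    + 3 * (Bb c d t θ)^2 * dQq c d t θ / (Qq c d t θ)^4) * Ww c d k t θ
  + (1 + Aa c d t θ / (Qq c d t θ)^2 - (Bb c d t θ)^2 / (Qq c d t θ)^3) * dWw c d k t θ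

section CurveLemmas
variable {c d k : ℝ → V3} (hcs : ContDiff ℝ (⊤ : ℕ∞) c) (hds : ContDiff ℝ (⊤ : ℕ∞) d)

omit hcs hds in
lemma cd_diff {f : ℝ → V3} (hf : ContDiff ℝ (⊤ : ℕ∞) f) : Differentiable ℝ f :=
  (hf.of_le (by simp) : ContDiff ℝ (⊤:ℕ∞) f).differentiable (by simp)

omit hcs hds in
lemma cd_deriv {f : ℝ → V3} (hf : ContDiff ℝ (⊤ : ℕ∞) f) : ContDiff ℝ (⊤:ℕ∞) (deriv f) :=
  (contDiff_infty_iff_deriv.mp (hf.of_le (by simp))).2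

omit hcs hds in
lemma cd_diff2 {f : ℝ → V3} (hf : ContDiff ℝ (⊤ : ℕ∞) f) : Differentiable ℝ (deriv f) :=
  (cd_deriv hf).differentiable (by simp)

@[simp] lemma dot3_zero_right (u : V3) : dot3 u 0 = 0 := by simp [dot3]
@[simp] lemma dot3_add_left (u v w : V3) : dot3 (u + v) w = dot3 u w + dot3 v w := by
  simp [dot3]; ring

include hcs hds in
lemma deriv_curve (t : ℝ) : deriv (fun θ => c θ + t • d θ) = uu c d t := by
  funext θ
  exact (((cd_diff hcs θ).hasDerivAt).add
    (((cd_diff hds θ).hasDerivAt).const_smul t)).deriv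

include hcs hds in
lemma hasDerivAt_uu (t θ : ℝ) : HasDerivAt (uu c d t) (duu c d t θ) θ := by
  exact (((cd_diff2 hcs θ).hasDerivAt).add ((((cd_diff2 hds θ)).hasDerivAt).const_smul t))

include hcs hds in
lemma thetaK_integrand (t : ℝ) (hne : ∀ θ, uu c d t θ ≠ 0) (θ : ℝ) :
    (1 + kappaSq (fun s => c s + t • d s) θ)
      * dot3 (cross3 (c θ + t • d θ) (unitT (fun s => c s + t • d s) θ)) (k θ)
      * norm3 (deriv (fun s => c s + t • d s) θ)
      = Gf c d k t θ := by
  have hγ : deriv (fun s => c s + t • d s) = uu c d t := deriv_curve hcs hds t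
  have hκ := kappaSq_eq (fun s => c s + t • d s) (uu c d t) (duu c d t) hγ
    (hasDerivAt_uu hcs hds t) hne θ
  have hT : unitT (fun s => c s + t • d s) θ = (norm3 (uu c d t θ))⁻¹ • uu c d t θ := by
    show (norm3 (deriv (fun s => c s + t • d s) θ))⁻¹ • deriv (fun s => c s + t • d s) θ = _
    rw [hγ]
  have hn : norm3 (uu c d t θ) ≠ 0 := (norm3_pos _ (hne θ)).ne'
  rw [hκ, hT, hγ, dot3_cross3_smul]
  show _ * ((norm3 (uu c d t θ))⁻¹ * dot3 (cross3 (c θ + t • d θ) (uu c d t θ)) (k θ))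
      * norm3 (uu c d t θ) = _
  rw [Gf]
  show _ = (1 + Aa c d t θ / Qq c d t θ ^ 2 - Bb c d t θ ^ 2 / Qq c d t θ ^ 3) *
    dot3 (cross3 (c θ + t • d θ) (uu c d t θ)) (k θ)
  simp only [Qq, Aa, Bb]
  field_simp
  ring_nf
  have hQ' : dot3 (uu c d t θ) (uu c d t θ) ≠ 0 := (dot3_pos_of_ne _ (hne θ)).ne'
  field_simp

include hcs hds in
lemma thetaK_eq (t : ℝ) (hne : ∀ θ, uu c d t θ ≠ 0) :
    ThetaK (fun s => c s + t • d s) k = ∫ θ in (0:ℝ)..(2*π), Gf c d k t θ := by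
  show arcInt _ _ = _
  unfold arcInt
  apply intervalIntegral.integral_congr
  intro θ _
  exact thetaK_integrand hcs hds t hne θ

omit hcs hds in
lemma hasDerivAt_Gf (θ t : ℝ) (hQ : Qq c d t θ ≠ 0) :
    HasDerivAt (fun t => Gf c d k t θ) (DGf c d k t θ) t := by
  have hu : HasDerivAt (fun t => uu c d t θ) (deriv d θ) t := by
    have : HasDerivAt (fun t : ℝ => deriv c θ + t • deriv d θ) ((1:ℝ) • deriv d θ) t :=
      ((hasDerivAt_id t).smul_const _).const_add _
    simpa [uu] using this
  have hdu : HasDerivAt (fun t => duu c d t θ) (deriv (deriv d) θ) t := by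
    have : HasDerivAt (fun t : ℝ => deriv (deriv c) θ + t • deriv (deriv d) θ)
        ((1:ℝ) • deriv (deriv d) θ) t := ((hasDerivAt_id t).smul_const _).const_add _
    simpa [duu] using this
  have hγt : HasDerivAt (fun t : ℝ => c θ + t • d θ) (d θ) t := by
    have : HasDerivAt (fun t : ℝ => c θ + t • d θ) ((1:ℝ) • d θ) t :=
      ((hasDerivAt_id t).smul_const _).const_add _
    simpa using this
  have hQt : HasDerivAt (fun t => Qq c d t θ) (dQq c d t θ) t := by
    have := hasDerivAt_dot3 hu hu
    refine this.congr_deriv ?_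
    rw [dQq, dot3_comm (uu c d t θ) (deriv d θ)]; ring
  have hAt : HasDerivAt (fun t => Aa c d t θ) (dAa c d t θ) t := by
    have := hasDerivAt_dot3 hdu hdu
    refine this.congr_deriv ?_
    rw [dAa, dot3_comm (duu c d t θ) (deriv (deriv d) θ)]; ring
  have hBt : HasDerivAt (fun t => Bb c d t θ) (dBb c d t θ) t :=
    hasDerivAt_dot3 hu hdu
  have hWt : HasDerivAt (fun t => Ww c d k t θ) (dWw c d k t θ) t := by
    have := hasDerivAt_dot3 (hasDerivAt_cross3 hγt hu) (hasDerivAt_const t (k θ))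
    refine this.congr_deriv ?_
    simp [dWw]
  have h1 : HasDerivAt (fun t => 1 + Aa c d t θ / (Qq c d t θ)^2)
      ((dAa c d t θ * (Qq c d t θ)^2 - Aa c d t θ * (2 * (Qq c d t θ)^1 * dQq c d t θ))
        / ((Qq c d t θ)^2)^2) t :=
    (hAt.div (hQt.pow 2) (pow_ne_zero 2 hQ)).const_add 1
  have h2 : HasDerivAt (fun t => (Bb c d t θ)^2 / (Qq c d t θ)^3)
      (((2 * (Bb c d t θ)^1 * dBb c d t θ) * (Qq c d t θ)^3
        - (Bb c d t θ)^2 * (3 * (Qq c d t θ)^2 * dQq c d t θ)) / ((Qq c d t θ)^3)^2) t :=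
    (hBt.pow 2).div (hQt.pow 3) (pow_ne_zero 3 hQ)
  have := (h1.sub h2).mul hWt
  refine this.congr_deriv ?_
  rw [DGf]
  simp only [Pi.sub_apply]
  field_simp
  ring

end CurveLemmas
end CW
namespace CW

lemma cont_dot3 {α : Type*} [TopologicalSpace α] {f g : α → V3}
    (hf : Continuous f) (hg : Continuous g) : Continuous fun p => dot3 (f p) (g p) := by
  simp only [dot3]
  exact ((((continuous_apply 0).comp hf).mul ((continuous_apply 0).comp hg)).add
    (((continuous_apply 1).comp hf).mul ((continuous_apply 1).comp hg))).add
    (((continuous_apply 2).comp hf).mul ((continuous_apply 2).comp hg))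

lemma cont_cross3 {α : Type*} [TopologicalSpace α] {f g : α → V3}
    (hf : Continuous f) (hg : Continuous g) : Continuous fun p => cross3 (f p) (g p) := by
  apply continuous_pi
  intro i
  fin_cases i
  · simpa [Pi.mul_def, Pi.sub_def, Function.comp_def] using (((continuous_apply 1).comp hf).mul ((continuous_apply 2).comp hg)).sub
      (((continuous_apply 2).comp hf).mul ((continuous_apply 1).comp hg))
  · simpa [Pi.mul_def, Pi.sub_def, Function.comp_def] using (((continuous_apply 2).comp hf).mul ((continuous_apply 0).comp hg)).sub
      (((continuous_apply 0).comp hf).mul ((continuous_apply 2).comp hg))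
  · simpa [Pi.mul_def, Pi.sub_def, Function.comp_def] using (((continuous_apply 0).comp hf).mul ((continuous_apply 1).comp hg)).sub
      (((continuous_apply 1).comp hf).mul ((continuous_apply 0).comp hg))

section EpsDelta
variable {c d k : ℝ → V3} (hcs : ContDiff ℝ (⊤ : ℕ∞) c) (hds : ContDiff ℝ (⊤ : ℕ∞) d)

omit hcs hds in
lemma cont_of_smooth {f : ℝ → V3} (hf : ContDiff ℝ (⊤ : ℕ∞) f) : Continuous f := hf.continuous

omit hcs hds in
lemma cont_deriv {f : ℝ → V3} (hf : ContDiff ℝ (⊤ : ℕ∞) f) : Continuous (deriv f) :=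
  (cd_deriv hf).continuous

omit hcs hds in
lemma cont_deriv2 {f : ℝ → V3} (hf : ContDiff ℝ (⊤ : ℕ∞) f) : Continuous (deriv (deriv f)) :=
  (contDiff_infty_iff_deriv.mp (cd_deriv hf)).2.continuous

omit hcs hds in
lemma periodic_all {f : ℝ → ℝ} (hf : ∀ θ, f (θ + 2*π) = f θ)
    (P : ℝ → Prop) (h : ∀ θ ∈ Set.Icc 0 (2*π), P (f θ)) : ∀ θ, P (f θ) := by
  intro θ
  have hper : Function.Periodic f (2*π) := hf
  obtain ⟨y, hy, hxy⟩ := hper.exists_mem_Ico₀ (by positivity) θ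
  rw [hxy]
  exact h y ⟨hy.1, hy.2.le⟩

include hcs hds in
lemma exists_eps (hcp : ∀ θ, c (θ + 2*π) = c θ) (hdp : ∀ θ, d (θ + 2*π) = d θ)
    (hcne : ∀ θ, deriv c θ ≠ 0) :
    ∃ ε > (0:ℝ), ∃ δ > (0:ℝ), ∀ t : ℝ, |t| ≤ ε → ∀ θ, δ ≤ Qq c d t θ := by
  set Q0 : ℝ → ℝ := fun θ => dot3 (deriv c θ) (deriv c θ) with hQ0def
  set sf : ℝ → ℝ := fun θ => dot3 (deriv c θ) (deriv d θ) with hsfdef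
  set rf : ℝ → ℝ := fun θ => dot3 (deriv d θ) (deriv d θ) with hrfdef
  have hc1per := periodic_deriv (2*π) hcp
  have hd1per := periodic_deriv (2*π) hdp
  have hQ0cont : Continuous Q0 := cont_dot3 (cont_deriv hcs) (cont_deriv hcs)
  have hsfcont : Continuous sf := cont_dot3 (cont_deriv hcs) (cont_deriv hds)
  have hrfcont : Continuous rf := cont_dot3 (cont_deriv hds) (cont_deriv hds)
  have hK : IsCompact (Set.Icc (0:ℝ) (2*π)) := isCompact_Icc
  have hKne : (Set.Icc (0:ℝ) (2*π)).Nonempty := ⟨0, by constructor <;> positivity⟩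
  obtain ⟨θ₀, hθ₀, hmin⟩ := hK.exists_isMinOn hKne hQ0cont.continuousOn
  set m := Q0 θ₀ with hmdef
  have hm : 0 < m := dot3_pos_of_ne _ (hcne θ₀)
  obtain ⟨C₁, hC₁⟩ := hK.exists_bound_of_continuousOn hsfcont.continuousOn
  obtain ⟨C₂, hC₂⟩ := hK.exists_bound_of_continuousOn hrfcont.continuousOn
  have hC₁0 : 0 ≤ C₁ := le_trans (norm_nonneg _) (hC₁ θ₀ hθ₀)
  have hC₂0 : 0 ≤ C₂ := le_trans (norm_nonneg _) (hC₂ θ₀ hθ₀)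
  set ε := min 1 (m / (2*(2*C₁ + C₂ + 1))) with hεdef
  have hεpos : 0 < ε := lt_min one_pos (by positivity)
  refine ⟨ε, hεpos, m/2, by positivity, ?_⟩
  intro t ht θ
  -- pointwise expansion
  have hexp : Qq c d t θ = Q0 θ + 2*t*sf θ + t^2 * rf θ := by
    simp only [Qq, uu, hQ0def, hsfdef, hrfdef, dot3, Pi.add_apply, Pi.smul_apply, smul_eq_mul]
    ring
  -- lower bound for Q0 θ
  have hQ0per : ∀ s, Q0 (s + 2*π) = Q0 s := fun s => by
    simp only [hQ0def]; rw [hc1per s]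
  have hsfper : ∀ s, sf (s + 2*π) = sf s := fun s => by
    simp only [hsfdef]; rw [hc1per s, hd1per s]
  have hQ0m : ∀ s, m ≤ Q0 s :=
    periodic_all hQ0per (fun x => m ≤ x) (fun s hs => hmin hs)
  have hsb : ∀ s, |sf s| ≤ C₁ :=
    periodic_all hsfper (fun x => |x| ≤ C₁)
      (fun s hs => by simpa [Real.norm_eq_abs] using hC₁ s hs)
  have hrb : ∀ s, 0 ≤ rf s := fun s => dot3_nonneg _
  have hε1 : ε ≤ 1 := min_le_left _ _
  have hε2 : ε ≤ m / (2*(2*C₁ + C₂ + 1)) := min_le_right _ _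
  have habs := abs_le.mp (le_trans ht (le_refl ε))
  have h1 : |2*t*sf θ| ≤ 2*ε*C₁ := by
    have h := mul_le_mul ht (hsb θ) (abs_nonneg _) hεpos.le
    calc |2*t*sf θ| = 2*(|t| * |sf θ|) := by rw [abs_mul, abs_mul, abs_two]; ring
      _ ≤ 2*(ε*C₁) := by linarith
      _ = 2*ε*C₁ := by ring
  have h2 : 0 ≤ t^2 * rf θ := mul_nonneg (sq_nonneg t) (hrb θ)
  have h3 : 2*ε*C₁ ≤ m/2 := by
    rw [le_div_iff₀ (by positivity : (0:ℝ) < 2*(2*C₁ + C₂ + 1))] at hε2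
    nlinarith [mul_nonneg hεpos.le hC₂0, mul_nonneg hεpos.le hC₁0, hεpos.le]
  have := abs_le.mp h1
  rw [hexp]
  nlinarith [hQ0m θ]

end EpsDelta
end CW
namespace CW
section MainDeriv
variable {c d k : ℝ → V3} (hcs : ContDiff ℝ (⊤ : ℕ∞) c) (hds : ContDiff ℝ (⊤ : ℕ∞) d) (hkc : Continuous k)

include hcs hds hkc in
lemma contGf_theta (t : ℝ) (hQ : ∀ θ, Qq c d t θ ≠ 0) :
    Continuous (fun θ => Gf c d k t θ) := by
  have cu : Continuous (fun θ => uu c d t θ) :=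
    (cont_deriv hcs).add ((cont_deriv hds).const_smul t)
  have cdu : Continuous (fun θ => duu c d t θ) :=
    (cont_deriv2 hcs).add ((cont_deriv2 hds).const_smul t)
  have cP : Continuous (fun θ => c θ + t • d θ) :=
    hcs.continuous.add (hds.continuous.const_smul t)
  have cQ : Continuous (fun θ => Qq c d t θ) := cont_dot3 cu cu
  have cA : Continuous (fun θ => Aa c d t θ) := cont_dot3 cdu cdu
  have cB : Continuous (fun θ => Bb c d t θ) := cont_dot3 cu cdu
  have cW : Continuous (fun θ => Ww c d k t θ) := cont_dot3 (cont_cross3 cP cu) hkc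
  exact ((continuous_const.add ((cA.div (cQ.pow 2) (fun θ => pow_ne_zero _ (hQ θ))))).sub
    ((cB.pow 2).div (cQ.pow 3) (fun θ => pow_ne_zero _ (hQ θ)))).mul cW

include hcs hds hkc in
lemma contDGf_theta (t : ℝ) (hQ : ∀ θ, Qq c d t θ ≠ 0) :
    Continuous (fun θ => DGf c d k t θ) := by
  have cu : Continuous (fun θ => uu c d t θ) :=
    (cont_deriv hcs).add ((cont_deriv hds).const_smul t)
  have cdu : Continuous (fun θ => duu c d t θ) :=
    (cont_deriv2 hcs).add ((cont_deriv2 hds).const_smul t)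
  have cP : Continuous (fun θ => c θ + t • d θ) :=
    hcs.continuous.add (hds.continuous.const_smul t)
  have cQ : Continuous (fun θ => Qq c d t θ) := cont_dot3 cu cu
  have cA : Continuous (fun θ => Aa c d t θ) := cont_dot3 cdu cdu
  have cB : Continuous (fun θ => Bb c d t θ) := cont_dot3 cu cdu
  have cW : Continuous (fun θ => Ww c d k t θ) := cont_dot3 (cont_cross3 cP cu) hkc
  have cdA : Continuous (fun θ => dAa c d t θ) :=
    continuous_const.mul (cont_dot3 cdu (cont_deriv2 hds))
  have cdQ : Continuous (fun θ => dQq c d t θ) :=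
    continuous_const.mul (cont_dot3 cu (cont_deriv hds))
  have cdB : Continuous (fun θ => dBb c d t θ) :=
    (cont_dot3 (cont_deriv hds) cdu).add (cont_dot3 cu (cont_deriv2 hds))
  have cdW : Continuous (fun θ => dWw c d k t θ) :=
    (cont_dot3 (cont_cross3 hds.continuous cu) hkc).add
      (cont_dot3 (cont_cross3 cP (cont_deriv hds)) hkc)
  have hQ2 : ∀ θ, (Qq c d t θ)^2 ≠ 0 := fun θ => pow_ne_zero _ (hQ θ)
  have hQ3 : ∀ θ, (Qq c d t θ)^3 ≠ 0 := fun θ => pow_ne_zero _ (hQ θ)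
  have hQ4 : ∀ θ, (Qq c d t θ)^4 ≠ 0 := fun θ => pow_ne_zero _ (hQ θ)
  exact (((((cdA.div (cQ.pow 2) hQ2).sub
      (((continuous_const.mul cA).mul cdQ).div (cQ.pow 3) hQ3)).sub
      (((continuous_const.mul cB).mul cdB).div (cQ.pow 3) hQ3)).add
      (((continuous_const.mul (cB.pow 2)).mul cdQ).div (cQ.pow 4) hQ4)).mul cW).add
    (((continuous_const.add (cA.div (cQ.pow 2) hQ2)).sub
      ((cB.pow 2).div (cQ.pow 3) hQ3)).mul cdW)

include hcs hds hkc in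
lemma contDGf_pair {S : Set (ℝ × ℝ)} (hQ : ∀ p ∈ S, Qq c d p.1 p.2 ≠ 0) :
    ContinuousOn (fun p : ℝ × ℝ => DGf c d k p.1 p.2) S := by
  have cu : Continuous (fun p : ℝ × ℝ => uu c d p.1 p.2) :=
    ((cont_deriv hcs).comp continuous_snd).add
      (continuous_fst.smul ((cont_deriv hds).comp continuous_snd))
  have cdu : Continuous (fun p : ℝ × ℝ => duu c d p.1 p.2) :=
    ((cont_deriv2 hcs).comp continuous_snd).add
      (continuous_fst.smul ((cont_deriv2 hds).comp continuous_snd))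
  have cP : Continuous (fun p : ℝ × ℝ => c p.2 + p.1 • d p.2) :=
    (hcs.continuous.comp continuous_snd).add
      (continuous_fst.smul (hds.continuous.comp continuous_snd))
  have cQ : Continuous (fun p : ℝ × ℝ => Qq c d p.1 p.2) := cont_dot3 cu cu
  have cA : Continuous (fun p : ℝ × ℝ => Aa c d p.1 p.2) := cont_dot3 cdu cdu
  have cB : Continuous (fun p : ℝ × ℝ => Bb c d p.1 p.2) := cont_dot3 cu cdu
  have cW : Continuous (fun p : ℝ × ℝ => Ww c d k p.1 p.2) :=
    cont_dot3 (cont_cross3 cP cu) (hkc.comp continuous_snd)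
  have cdA : Continuous (fun p : ℝ × ℝ => dAa c d p.1 p.2) :=
    continuous_const.mul (cont_dot3 cdu ((cont_deriv2 hds).comp continuous_snd))
  have cdQ : Continuous (fun p : ℝ × ℝ => dQq c d p.1 p.2) :=
    continuous_const.mul (cont_dot3 cu ((cont_deriv hds).comp continuous_snd))
  have cdB : Continuous (fun p : ℝ × ℝ => dBb c d p.1 p.2) :=
    (cont_dot3 ((cont_deriv hds).comp continuous_snd) cdu).add
      (cont_dot3 cu ((cont_deriv2 hds).comp continuous_snd))
  have cdW : Continuous (fun p : ℝ × ℝ => dWw c d k p.1 p.2) :=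
    (cont_dot3 (cont_cross3 (hds.continuous.comp continuous_snd) cu)
        (hkc.comp continuous_snd)).add
      (cont_dot3 (cont_cross3 cP ((cont_deriv hds).comp continuous_snd))
        (hkc.comp continuous_snd))
  have hQ2 : ∀ p ∈ S, (Qq c d p.1 p.2)^2 ≠ 0 := fun p hp => pow_ne_zero _ (hQ p hp)
  have hQ3 : ∀ p ∈ S, (Qq c d p.1 p.2)^3 ≠ 0 := fun p hp => pow_ne_zero _ (hQ p hp)
  have hQ4 : ∀ p ∈ S, (Qq c d p.1 p.2)^4 ≠ 0 := fun p hp => pow_ne_zero _ (hQ p hp)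
  exact ((((((cdA.continuousOn).div ((cQ.pow 2).continuousOn) hQ2).sub
      ((((continuous_const.mul cA).mul cdQ).continuousOn).div
        ((cQ.pow 3).continuousOn) hQ3)).sub
      ((((continuous_const.mul cB).mul cdB).continuousOn).div
        ((cQ.pow 3).continuousOn) hQ3)).add
      ((((continuous_const.mul (cB.pow 2)).mul cdQ).continuousOn).div
        ((cQ.pow 4).continuousOn) hQ4)).mul (cW.continuousOn)).add
    ((((continuousOn_const.add ((cA.continuousOn).div ((cQ.pow 2).continuousOn) hQ2)).sub
      (((cB.pow 2).continuousOn).div ((cQ.pow 3).continuousOn) hQ3))).mul (cdW.continuousOn))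

include hcs hds hkc in
lemma hasDerivAt_thetaK (hcp : ∀ θ, c (θ + 2*π) = c θ) (hdp : ∀ θ, d (θ + 2*π) = d θ)
    (hcne : ∀ θ, deriv c θ ≠ 0) :
    HasDerivAt (fun t : ℝ => ThetaK (fun s => c s + t • d s) k)
      (∫ θ in (0:ℝ)..(2*π), DGf c d k 0 θ) 0 := by
  obtain ⟨ε, εpos, δ, δpos, hQδ⟩ := exists_eps hcs hds hcp hdp hcne
  have hQne : ∀ t : ℝ, |t| ≤ ε → ∀ θ, Qq c d t θ ≠ 0 :=
    fun t ht θ => (lt_of_lt_of_le δpos (hQδ t ht θ)).ne'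
  have hne : ∀ t : ℝ, |t| ≤ ε → ∀ θ, uu c d t θ ≠ 0 := by
    intro t ht θ hzero
    apply hQne t ht θ
    rw [Qq, hzero]
    simp [dot3]
  have hQ0 : ∀ θ, Qq c d 0 θ ≠ 0 := hQne 0 (by simp [abs_of_nonneg, εpos.le])
  -- compact bound
  set S : Set (ℝ × ℝ) := Set.Icc (-ε) ε ×ˢ Set.Icc 0 (2*π) with hSdef
  have hScomp : IsCompact S := isCompact_Icc.prod isCompact_Icc
  have hQS : ∀ p ∈ S, Qq c d p.1 p.2 ≠ 0 := by
    intro p hp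
    exact hQne p.1 (abs_le.mpr ⟨hp.1.1, hp.1.2⟩) p.2
  obtain ⟨C, hC⟩ := hScomp.exists_bound_of_continuousOn (contDGf_pair hcs hds hkc hQS)
  have h2π : (0:ℝ) ≤ 2*π := by positivity
  have hmain := intervalIntegral.hasDerivAt_integral_of_dominated_loc_of_deriv_le
    (F := fun t θ => Gf c d k t θ) (F' := fun t θ => DGf c d k t θ)
    (a := 0) (b := 2*π) (μ := MeasureTheory.volume) (bound := fun _ => C) (x₀ := (0:ℝ)) (Metric.ball_mem_nhds (0:ℝ) εpos)
    (by
      filter_upwards [Metric.ball_mem_nhds (0:ℝ) εpos] with t ht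
      have : |t| ≤ ε := le_of_lt (by simpa [Real.dist_eq] using ht)
      exact (contGf_theta hcs hds hkc t (hQne t this)).aestronglyMeasurable)
    ((contGf_theta hcs hds hkc 0 hQ0).intervalIntegrable 0 (2*π))
    ((contDGf_theta hcs hds hkc 0 hQ0).aestronglyMeasurable)
    (by
      apply MeasureTheory.ae_of_all
      intro θ hθ t ht
      have ht' : |t| ≤ ε := le_of_lt (by simpa [Real.dist_eq] using ht)
      have hθ' : θ ∈ Set.Icc 0 (2*π) := by
        rw [Set.uIoc_of_le h2π] at hθ
        exact ⟨hθ.1.le, hθ.2⟩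
      have := hC (t, θ) ⟨abs_le.mp ht', hθ'⟩
      simpa using this)
    (intervalIntegrable_const)
    (by
      apply MeasureTheory.ae_of_all
      intro θ hθ t ht
      have ht' : |t| ≤ ε := le_of_lt (by simpa [Real.dist_eq] using ht)
      exact hasDerivAt_Gf θ t (hQne t ht' θ))
  have heq : (fun t : ℝ => ThetaK (fun s => c s + t • d s) k)
      =ᶠ[nhds (0:ℝ)] fun t => ∫ θ in (0:ℝ)..(2*π), Gf c d k t θ := by
    filter_upwards [Metric.ball_mem_nhds (0:ℝ) εpos] with t ht
    have : |t| ≤ ε := le_of_lt (by simpa [Real.dist_eq] using ht)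
    exact thetaK_eq hcs hds t (hne t this)
  exact hmain.2.congr_of_eventuallyEq heq

end MainDeriv
end CW
namespace CW

def Q0 (c : ℝ → V3) (θ : ℝ) : ℝ := dot3 (deriv c θ) (deriv c θ)
def B0 (c : ℝ → V3) (θ : ℝ) : ℝ := dot3 (deriv c θ) (deriv (deriv c) θ)
def A0 (c : ℝ → V3) (θ : ℝ) : ℝ := dot3 (deriv (deriv c) θ) (deriv (deriv c) θ)
def kap0 (c : ℝ → V3) (θ : ℝ) : ℝ := A0 c θ/(Q0 c θ)^2 - (B0 c θ)^2/(Q0 c θ)^3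
def QP0 (c : ℝ → V3) (θ : ℝ) : ℝ :=
  dot3 (deriv (deriv c) θ) (deriv c θ) + dot3 (deriv c θ) (deriv (deriv c) θ)
def AP0 (c : ℝ → V3) (θ : ℝ) : ℝ :=
  dot3 (deriv (deriv (deriv c)) θ) (deriv (deriv c) θ)
    + dot3 (deriv (deriv c) θ) (deriv (deriv (deriv c)) θ)
def BP0 (c : ℝ → V3) (θ : ℝ) : ℝ :=
  dot3 (deriv (deriv c) θ) (deriv (deriv c) θ)
    + dot3 (deriv c θ) (deriv (deriv (deriv c)) θ)
def DK (c : ℝ → V3) (θ : ℝ) : ℝ :=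
  (AP0 c θ * (Q0 c θ)^2 - A0 c θ * (2 * (Q0 c θ)^1 * QP0 c θ)) / ((Q0 c θ)^2)^2
  - ((2 * (B0 c θ)^1 * BP0 c θ) * (Q0 c θ)^3
      - (B0 c θ)^2 * (3 * (Q0 c θ)^2 * QP0 c θ)) / ((Q0 c θ)^3)^2
def Sd (c d : ℝ → V3) (θ : ℝ) : ℝ :=
  4 * kap0 c θ * (dot3 (deriv d θ) (deriv c θ) / Q0 c θ)
  - 2 * (dot3 (deriv (deriv d) θ) (deriv (deriv c) θ) / (Q0 c θ)^2
       - B0 c θ * dot3 (deriv (deriv d) θ) (deriv c θ) / (Q0 c θ)^3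
       - B0 c θ * dot3 (deriv d θ) (deriv (deriv c) θ) / (Q0 c θ)^3
       + (B0 c θ)^2 * dot3 (deriv d θ) (deriv c θ) / (Q0 c θ)^4)
def OmS (c h k : ℝ → V3) (θ : ℝ) : ℝ :=
  3 * (1 + kap0 c θ) * dot3 (deriv c θ) (cross3 (h θ) (k θ))
  + DK c θ * dot3 (c θ) (cross3 (h θ) (k θ))
  + Sd c h θ * dot3 (cross3 (c θ) (deriv c θ)) (k θ)
  - Sd c k θ * dot3 (cross3 (c θ) (deriv c θ)) (h θ)

lemma dot3_smul_left (r : ℝ) (x y : V3) : dot3 (r • x) y = r * dot3 x y := by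
  simp [dot3]; ring
lemma dot3_smul_right (r : ℝ) (x y : V3) : dot3 x (r • y) = r * dot3 x y := by
  simp [dot3]; ring
lemma dot3_comb2 (a b a' b' : ℝ) (x y x' y' : V3) :
    dot3 (a • x - b • y) (a' • x' - b' • y')
      = a*a'*dot3 x x' - a*b'*dot3 x y' - b*a'*dot3 y x' + b*b'*dot3 y y' := by
  simp [dot3, Pi.smul_apply, Pi.sub_apply, smul_eq_mul]; ring

section Omega
variable {c h k : ℝ → V3} (hcs : ContDiff ℝ (⊤ : ℕ∞) c) (hhs : ContDiff ℝ (⊤ : ℕ∞) h) (hks : ContDiff ℝ (⊤ : ℕ∞) k)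
  (hcne : ∀ θ, deriv c θ ≠ 0)

include hcs in
lemma hc1_hasDeriv : ∀ θ, HasDerivAt (deriv c) (deriv (deriv c) θ) θ :=
  fun θ => ((cd_diff2 hcs) θ).hasDerivAt

include hcs in
lemma hc2_hasDeriv : ∀ θ, HasDerivAt (deriv (deriv c)) (deriv (deriv (deriv c)) θ) θ := by
  intro θ
  have h2 : ContDiff ℝ (⊤:ℕ∞) (deriv (deriv c)) :=
    (contDiff_infty_iff_deriv.mp (cd_deriv hcs)).2
  exact (h2.differentiable (by simp) θ).hasDerivAt

include hcs hcne in
lemma kappaSq_closed : kappaSq c = kap0 c := by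
  funext θ
  exact kappaSq_eq c (deriv c) (deriv (deriv c)) rfl (hc1_hasDeriv hcs) hcne θ

include hcs hcne in
lemma hasDerivAt_kap0 (θ : ℝ) : HasDerivAt (kap0 c) (DK c θ) θ := by
  have hQne : Q0 c θ ≠ 0 := (dot3_pos_of_ne _ (hcne θ)).ne'
  have hQ : HasDerivAt (Q0 c) (QP0 c θ) θ := hasDerivAt_dot3 (hc1_hasDeriv hcs θ) (hc1_hasDeriv hcs θ)
  have hA : HasDerivAt (A0 c) (AP0 c θ) θ := hasDerivAt_dot3 (hc2_hasDeriv hcs θ) (hc2_hasDeriv hcs θ)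
  have hB : HasDerivAt (B0 c) (BP0 c θ) θ := hasDerivAt_dot3 (hc1_hasDeriv hcs θ) (hc2_hasDeriv hcs θ)
  exact (hA.div (hQ.pow 2) (pow_ne_zero 2 hQne)).sub
    ((hB.pow 2).div (hQ.pow 3) (pow_ne_zero 3 hQne))

include hcs hcne in
lemma hasDerivAt_kappaSq (θ : ℝ) : HasDerivAt (kappaSq c) (DK c θ) θ := by
  rw [kappaSq_closed hcs hcne]
  exact hasDerivAt_kap0 hcs hcne θ

include hcs hcne in
lemma deriv_kappaSq (θ : ℝ) : deriv (kappaSq c) θ = DK c θ :=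
  (hasDerivAt_kappaSq hcs hcne θ).deriv

-- closed form of Ds c (Ds c f)
include hcs hcne in
lemma DsDs_closed {f : ℝ → V3} (hfs : ContDiff ℝ (⊤ : ℕ∞) f) (θ : ℝ) :
    Ds c (Ds c f) θ = (Q0 c θ)⁻¹ • deriv (deriv f) θ
      - (B0 c θ / (Q0 c θ)^2) • deriv f θ :=
  DsDs_eq c f (deriv c) (deriv (deriv c)) (deriv f) (deriv (deriv f)) rfl
    (hc1_hasDeriv hcs) rfl (hc1_hasDeriv hfs) hcne θ

include hcs hhs hks hcne in
lemma omega_eq :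
    OmegaK c h k = ∫ θ in (0:ℝ)..(2*π), OmS c h k θ := by
  show arcInt _ _ = _
  unfold arcInt
  apply intervalIntegral.integral_congr
  intro θ _
  show (3 * (1 + kappaSq c θ) * dot3 (unitT c θ) (cross3 (h θ) (k θ))
    + DsScalar c (kappaSq c) θ * dot3 (c θ) (cross3 (h θ) (k θ))
    + (4 * kappaSq c θ * dot3 (Ds c h θ) (unitT c θ)
        - 2 * dot3 (Ds c (Ds c h) θ) (Ds2c c θ)) * dot3 (cross3 (c θ) (unitT c θ)) (k θ)
    - (4 * kappaSq c θ * dot3 (Ds c k θ) (unitT c θ)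
        - 2 * dot3 (Ds c (Ds c k) θ) (Ds2c c θ)) * dot3 (cross3 (c θ) (unitT c θ)) (h θ))
    * norm3 (deriv c θ) = OmS c h k θ
  have hn : norm3 (deriv c θ) ≠ 0 := (norm3_pos _ (hcne θ)).ne'
  have hQne : Q0 c θ ≠ 0 := (dot3_pos_of_ne _ (hcne θ)).ne'
  have hT : unitT c θ = (norm3 (deriv c θ))⁻¹ • deriv c θ := rfl
  have hDh : Ds c h θ = (norm3 (deriv c θ))⁻¹ • deriv h θ := rfl
  have hDk : Ds c k θ = (norm3 (deriv c θ))⁻¹ • deriv k θ := rfl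
  have hnn : (norm3 (deriv c θ))⁻¹ * (norm3 (deriv c θ))⁻¹ = (Q0 c θ)⁻¹ := by
    rw [← mul_inv, norm3_sq]; rfl
  -- pieces
  have p1 : dot3 (unitT c θ) (cross3 (h θ) (k θ)) * norm3 (deriv c θ)
      = dot3 (deriv c θ) (cross3 (h θ) (k θ)) := by
    rw [hT, dot3_smul_left]; field_simp
  have p4k : dot3 (cross3 (c θ) (unitT c θ)) (k θ) * norm3 (deriv c θ)
      = dot3 (cross3 (c θ) (deriv c θ)) (k θ) := by
    rw [hT, dot3_cross3_smul]; field_simp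
  have p4h : dot3 (cross3 (c θ) (unitT c θ)) (h θ) * norm3 (deriv c θ)
      = dot3 (cross3 (c θ) (deriv c θ)) (h θ) := by
    rw [hT, dot3_cross3_smul]; field_simp
  have p2h : dot3 (Ds c h θ) (unitT c θ) = dot3 (deriv h θ) (deriv c θ) / Q0 c θ := by
    rw [hDh, hT, dot3_smul_left, dot3_smul_right, ← mul_assoc, hnn]
    field_simp
  have p2k : dot3 (Ds c k θ) (unitT c θ) = dot3 (deriv k θ) (deriv c θ) / Q0 c θ := by
    rw [hDk, hT, dot3_smul_left, dot3_smul_right, ← mul_assoc, hnn]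
    field_simp
  have p3h : dot3 (Ds c (Ds c h) θ) (Ds2c c θ)
      = dot3 (deriv (deriv h) θ) (deriv (deriv c) θ) / (Q0 c θ)^2
        - B0 c θ * dot3 (deriv (deriv h) θ) (deriv c θ) / (Q0 c θ)^3
        - B0 c θ * dot3 (deriv h θ) (deriv (deriv c) θ) / (Q0 c θ)^3
        + (B0 c θ)^2 * dot3 (deriv h θ) (deriv c θ) / (Q0 c θ)^4 := by
    rw [show Ds2c c = Ds c (Ds c c) from rfl, DsDs_closed hcs hcne hhs θ,
      DsDs_closed hcs hcne hcs θ, dot3_comb2]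
    field_simp
  have p3k : dot3 (Ds c (Ds c k) θ) (Ds2c c θ)
      = dot3 (deriv (deriv k) θ) (deriv (deriv c) θ) / (Q0 c θ)^2
        - B0 c θ * dot3 (deriv (deriv k) θ) (deriv c θ) / (Q0 c θ)^3
        - B0 c θ * dot3 (deriv k θ) (deriv (deriv c) θ) / (Q0 c θ)^3
        + (B0 c θ)^2 * dot3 (deriv k θ) (deriv c θ) / (Q0 c θ)^4 := by
    rw [show Ds2c c = Ds c (Ds c c) from rfl, DsDs_closed hcs hcne hks θ,
      DsDs_closed hcs hcne hcs θ, dot3_comb2]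
    field_simp
  have hκ : kappaSq c θ = kap0 c θ := by rw [kappaSq_closed hcs hcne]
  have hDsS : DsScalar c (kappaSq c) θ = (norm3 (deriv c θ))⁻¹ * DK c θ := by
    rw [DsScalar, deriv_kappaSq hcs hcne]
  -- assemble
  rw [hκ, hDsS]
  have expand :
      (3 * (1 + kap0 c θ) * dot3 (unitT c θ) (cross3 (h θ) (k θ))
        + (norm3 (deriv c θ))⁻¹ * DK c θ * dot3 (c θ) (cross3 (h θ) (k θ))
        + (4 * kap0 c θ * dot3 (Ds c h θ) (unitT c θ)
            - 2 * dot3 (Ds c (Ds c h) θ) (Ds2c c θ)) * dot3 (cross3 (c θ) (unitT c θ)) (k θ)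
        - (4 * kap0 c θ * dot3 (Ds c k θ) (unitT c θ)
            - 2 * dot3 (Ds c (Ds c k) θ) (Ds2c c θ)) * dot3 (cross3 (c θ) (unitT c θ)) (h θ))
        * norm3 (deriv c θ)
      = 3 * (1 + kap0 c θ) * (dot3 (unitT c θ) (cross3 (h θ) (k θ)) * norm3 (deriv c θ))
        + ((norm3 (deriv c θ))⁻¹ * norm3 (deriv c θ)) * DK c θ * dot3 (c θ) (cross3 (h θ) (k θ))
        + (4 * kap0 c θ * dot3 (Ds c h θ) (unitT c θ)
            - 2 * dot3 (Ds c (Ds c h) θ) (Ds2c c θ))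
          * (dot3 (cross3 (c θ) (unitT c θ)) (k θ) * norm3 (deriv c θ))
        - (4 * kap0 c θ * dot3 (Ds c k θ) (unitT c θ)
            - 2 * dot3 (Ds c (Ds c k) θ) (Ds2c c θ))
          * (dot3 (cross3 (c θ) (unitT c θ)) (h θ) * norm3 (deriv c θ)) := by
    ring
  rw [expand, p1, p4k, p4h, p2h, p2k, p3h, p3k, inv_mul_cancel₀ hn]
  rw [OmS, Sd, Sd]
  ring

end Omega
end CW
namespace CW

def Dfn (c h k : ℝ → V3) (θ : ℝ) : ℝ := dot3 (c θ) (cross3 (h θ) (k θ))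
def dDfn (c h k : ℝ → V3) (θ : ℝ) : ℝ :=
  dot3 (deriv c θ) (cross3 (h θ) (k θ)) + dot3 (c θ) (cross3 (deriv h θ) (k θ))
    + dot3 (c θ) (cross3 (h θ) (deriv k θ))
def Phi (c h k : ℝ → V3) (θ : ℝ) : ℝ := -((1 + kap0 c θ) * Dfn c h k θ)
def DPhi (c h k : ℝ → V3) (θ : ℝ) : ℝ :=
  -(DK c θ * Dfn c h k θ + (1 + kap0 c θ) * dDfn c h k θ)

lemma dot3_add_right (u v w : V3) : dot3 u (v + w) = dot3 u v + dot3 u w := by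
  simp [dot3]; ring

section Final
variable {c h k : ℝ → V3} (hcs : ContDiff ℝ (⊤ : ℕ∞) c) (hhs : ContDiff ℝ (⊤ : ℕ∞) h) (hks : ContDiff ℝ (⊤ : ℕ∞) k)
  (hcne : ∀ θ, deriv c θ ≠ 0)

include hcs hhs hks hcne in
lemma hasDerivAt_Phi (θ : ℝ) : HasDerivAt (Phi c h k) (DPhi c h k θ) θ := by
  have hD : HasDerivAt (Dfn c h k) (dDfn c h k θ) θ := by
    have := hasDerivAt_dot3 ((cd_diff hcs θ).hasDerivAt)
      (hasDerivAt_cross3 ((cd_diff hhs θ).hasDerivAt) ((cd_diff hks θ).hasDerivAt))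
    refine this.congr_deriv ?_
    rw [dDfn, dot3_add_right]
    ring
  have := (((hasDerivAt_kap0 hcs hcne θ).const_add 1).mul hD).neg
  refine this.congr_deriv ?_
  all_goals (simp only [DPhi])

omit hcne in
include hcs hhs hks in
lemma cont_DPhi (hcne : ∀ θ, deriv c θ ≠ 0) : Continuous (DPhi c h k) := by
  have hQne : ∀ θ, Q0 c θ ≠ 0 := fun θ => (dot3_pos_of_ne _ (hcne θ)).ne'
  have c1 : Continuous (deriv c) := cont_deriv hcs
  have c2 : Continuous (deriv (deriv c)) := cont_deriv2 hcs
  have c3 : Continuous (deriv (deriv (deriv c))) :=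
    ((contDiff_infty_iff_deriv.mp ((contDiff_infty_iff_deriv.mp (cd_deriv hcs)).2)).2).continuous
  have cQ : Continuous (Q0 c) := cont_dot3 c1 c1
  have cA : Continuous (A0 c) := cont_dot3 c2 c2
  have cB : Continuous (B0 c) := cont_dot3 c1 c2
  have cQP : Continuous (QP0 c) := (cont_dot3 c2 c1).add (cont_dot3 c1 c2)
  have cAP : Continuous (AP0 c) := (cont_dot3 c3 c2).add (cont_dot3 c2 c3)
  have cBP : Continuous (BP0 c) := (cont_dot3 c2 c2).add (cont_dot3 c1 c3)
  have cDK : Continuous (DK c) := by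
    apply Continuous.sub
    · exact ((cAP.mul (cQ.pow 2)).sub (cA.mul ((continuous_const.mul (cQ.pow 1)).mul cQP))).div
        ((cQ.pow 2).pow 2) (fun θ => pow_ne_zero _ (pow_ne_zero _ (hQne θ)))
    · exact ((((continuous_const.mul (cB.pow 1)).mul cBP).mul (cQ.pow 3)).sub
        ((cB.pow 2).mul ((continuous_const.mul (cQ.pow 2)).mul cQP))).div
        ((cQ.pow 3).pow 2) (fun θ => pow_ne_zero _ (pow_ne_zero _ (hQne θ)))
  have ckap : Continuous (kap0 c) :=
    (cA.div (cQ.pow 2) (fun θ => pow_ne_zero _ (hQne θ))).sub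
      ((cB.pow 2).div (cQ.pow 3) (fun θ => pow_ne_zero _ (hQne θ)))
  have cD : Continuous (Dfn c h k) :=
    cont_dot3 hcs.continuous (cont_cross3 hhs.continuous hks.continuous)
  have cdD : Continuous (dDfn c h k) :=
    ((cont_dot3 c1 (cont_cross3 hhs.continuous hks.continuous)).add
      (cont_dot3 hcs.continuous (cont_cross3 (cont_deriv hhs) hks.continuous))).add
      (cont_dot3 hcs.continuous (cont_cross3 hhs.continuous (cont_deriv hks)))
  exact ((cDK.mul cD).add ((continuous_const.add ckap).mul cdD)).neg

include hcs hhs hks hcne in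
lemma int_DPhi_zero (hcp : ∀ θ, c (θ + 2*π) = c θ) (hhp : ∀ θ, h (θ + 2*π) = h θ)
    (hkp : ∀ θ, k (θ + 2*π) = k θ) :
    (∫ θ in (0:ℝ)..(2*π), DPhi c h k θ) = 0 := by
  have hint := intervalIntegral.integral_eq_sub_of_hasDerivAt
    (f := Phi c h k) (f' := DPhi c h k)
    (fun θ _ => hasDerivAt_Phi hcs hhs hks hcne θ)
    ((cont_DPhi hcs hhs hks hcne).intervalIntegrable 0 (2*π))
  rw [hint]
  have hc1per := periodic_deriv (2*π) hcp
  have hc2per := periodic_deriv (2*π) (hc1per)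
  have hPhiper : Phi c h k (0 + 2*π) = Phi c h k 0 := by
    simp only [Phi, Dfn, kap0, A0, B0, Q0, hc1per 0, hc2per 0, hcp 0, hhp 0, hkp 0]
  rw [show (2*π : ℝ) = 0 + 2*π by ring, hPhiper]
  ring

-- the two scalar/det identities
include hcs hhs hks hcne in
lemma stepA (θ : ℝ) :
    Sd c h θ = -(dAa c h 0 θ/(Qq c h 0 θ)^2 - 2*Aa c h 0 θ*dQq c h 0 θ/(Qq c h 0 θ)^3
      - 2*Bb c h 0 θ*dBb c h 0 θ/(Qq c h 0 θ)^3
      + 3*(Bb c h 0 θ)^2*dQq c h 0 θ/(Qq c h 0 θ)^4) := by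
  have hQne : Q0 c θ ≠ 0 := (dot3_pos_of_ne _ (hcne θ)).ne'
  simp only [Sd, kap0, A0, B0, Q0, dAa, dQq, dBb, Aa, Bb, Qq, uu, duu, zero_smul, add_zero] at *
  rw [dot3_comm (deriv h θ) (deriv c θ), dot3_comm (deriv (deriv h) θ) (deriv (deriv c) θ),
    dot3_comm (deriv (deriv h) θ) (deriv c θ), dot3_comm (deriv h θ) (deriv (deriv c) θ)]
  field_simp
  ring

lemma stepB (θ : ℝ) :
    (dot3 (cross3 (k θ) (deriv c θ)) (h θ) + dot3 (cross3 (c θ) (deriv k θ)) (h θ))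
    - (dot3 (cross3 (h θ) (deriv c θ)) (k θ) + dot3 (cross3 (c θ) (deriv h θ)) (k θ))
    = 3 * dot3 (deriv c θ) (cross3 (h θ) (k θ)) - dDfn c h k θ := by
  simp only [dDfn, dot3, cross3_0, cross3_1, cross3_2]
  ring

include hcs hhs hks hcne in
lemma pointwise_identity (θ : ℝ) :
    DGf c k h 0 θ - DGf c h k 0 θ = OmS c h k θ + DPhi c h k θ := by
  have hQne : Q0 c θ ≠ 0 := (dot3_pos_of_ne _ (hcne θ)).ne'
  have sA_h := stepA hcs hhs hks hcne θ
  have sA_k := stepA hcs hks hhs hcne θ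
  have sB := stepB (c := c) (h := h) (k := k) θ
  simp only [DGf, dAa, dQq, dBb, dWw, Aa, Bb, Qq, Ww, uu, duu, zero_smul, add_zero,
    OmS, DPhi, Dfn, kap0, A0, B0, Q0] at *
  linear_combination (dot3 (cross3 (c θ) (deriv c θ)) (h θ)) * sA_k
    - (dot3 (cross3 (c θ) (deriv c θ)) (k θ)) * sA_h
    + (1 + dot3 (deriv (deriv c) θ) (deriv (deriv c) θ)/(dot3 (deriv c θ) (deriv c θ))^2
        - (dot3 (deriv c θ) (deriv (deriv c) θ))^2/(dot3 (deriv c θ) (deriv c θ))^3) * sB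

end Final
end CW

/-- the presymplectic form induced by the curvature-weighted metric is
given by the explicit integral formula `Ω^{1+κ²}`. -/
theorem curvature_weighted_presymplectic_formula (c h k : ℝ → V3)
    (hc : IsImmersed c) (hh : IsDirection h) (hk : IsDirection k) :
    ∃ a b : ℝ,
      HasDerivAt (fun t : ℝ => ThetaK (fun θ => c θ + t • h θ) k) a 0 ∧
      HasDerivAt (fun t : ℝ => ThetaK (fun θ => c θ + t • k θ) h) b 0 ∧
      -a + b = OmegaK c h k := by
  obtain ⟨⟨hcs, hcp⟩, hcne⟩ := hc
  obtain ⟨hhs, hhp⟩ := hh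
  obtain ⟨hks, hkp⟩ := hk
  refine ⟨∫ θ in (0:ℝ)..(2*π), CW.DGf c h k 0 θ, ∫ θ in (0:ℝ)..(2*π), CW.DGf c k h 0 θ,
    CW.hasDerivAt_thetaK hcs hhs hks.continuous hcp hhp hcne,
    CW.hasDerivAt_thetaK hcs hks hhs.continuous hcp hkp hcne, ?_⟩
  have hQ0h : ∀ θ, CW.Qq c h 0 θ ≠ 0 := by
    intro θ
    have he : CW.Qq c h 0 θ = dot3 (deriv c θ) (deriv c θ) := by simp [CW.Qq, CW.uu]
    rw [he]; exact (CW.dot3_pos_of_ne _ (hcne θ)).ne'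
  have hQ0k : ∀ θ, CW.Qq c k 0 θ ≠ 0 := by
    intro θ
    have he : CW.Qq c k 0 θ = dot3 (deriv c θ) (deriv c θ) := by simp [CW.Qq, CW.uu]
    rw [he]; exact (CW.dot3_pos_of_ne _ (hcne θ)).ne'
  have ih : IntervalIntegrable (CW.DGf c h k 0) MeasureTheory.volume 0 (2*π) :=
    (CW.contDGf_theta hcs hhs hks.continuous 0 hQ0h).intervalIntegrable _ _
  have ik : IntervalIntegrable (CW.DGf c k h 0) MeasureTheory.volume 0 (2*π) :=
    (CW.contDGf_theta hcs hks hhs.continuous 0 hQ0k).intervalIntegrable _ _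
  have iP : IntervalIntegrable (CW.DPhi c h k) MeasureTheory.volume 0 (2*π) :=
    (CW.cont_DPhi hcs hhs hks hcne).intervalIntegrable _ _
  have h1 : (∫ θ in (0:ℝ)..(2*π), (CW.DGf c k h 0 θ - CW.DGf c h k 0 θ))
      = (∫ θ in (0:ℝ)..(2*π), CW.DGf c k h 0 θ) - ∫ θ in (0:ℝ)..(2*π), CW.DGf c h k 0 θ :=
    intervalIntegral.integral_sub ik ih
  have h2 : (∫ θ in (0:ℝ)..(2*π), CW.DPhi c h k θ) = 0 :=
    CW.int_DPhi_zero hcs hhs hks hcne hcp hhp hkp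
  have h3 : OmegaK c h k = ∫ θ in (0:ℝ)..(2*π), CW.OmS c h k θ :=
    CW.omega_eq hcs hhs hks hcne
  have h4 : (∫ θ in (0:ℝ)..(2*π), CW.OmS c h k θ)
      = ∫ θ in (0:ℝ)..(2*π),
          ((CW.DGf c k h 0 θ - CW.DGf c h k 0 θ) - CW.DPhi c h k θ) := by
    apply intervalIntegral.integral_congr
    intro θ _
    show CW.OmS c h k θ = CW.DGf c k h 0 θ - CW.DGf c h k 0 θ - CW.DPhi c h k θ
    have := CW.pointwise_identity hcs hhs hks hcne θ
    linarith
  have h5 : (∫ θ in (0:ℝ)..(2*π),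
      ((CW.DGf c k h 0 θ - CW.DGf c h k 0 θ) - CW.DPhi c h k θ))
      = (∫ θ in (0:ℝ)..(2*π), (CW.DGf c k h 0 θ - CW.DGf c h k 0 θ))
        - ∫ θ in (0:ℝ)..(2*π), CW.DPhi c h k θ :=
    intervalIntegral.integral_sub (ik.sub ih) iP
  rw [h3, h4, h5, h1, h2]
  ring
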